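/- arXiv:1702.07179 — 3 statements merged into one kernel-verified Lean document; each statement's English description precedes it below -/
import Mathlib

section
/- Let D = (E, 𝓕) be a delta-matroid. Then D is connected if and only if there is no proper nonempty union Y of skew classes of Q₂(D) that splits the basis collection ℬ of Q₂(D); that is, D is connected if and only if for every set X with ∅ ≠ X ≠ E, letting Y = {e, e' : e ∈ X}, the collection ℬ is not equal to {B₁ ∪ B₂ : B₁ ∈ {B ∩ Y : B ∈ ℬ}, B₂ ∈ {B ∩ (U − Y) : B ∈ ℬ}}. -/
noncomputable section
open scoped Classical symmDiff

/-- A set system: a finite ground set `E` together with a collection `Fs` of subsets of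
`E`, the feasible sets. -/
structure SetSystem (α : Type*) where
  E : Finset α
  Fs : Set (Finset α)

namespace SetSystem

variable {α : Type*} [DecidableEq α]

/-- A delta-matroid: a set system whose nonempty collection of feasible sets (subsets of
the ground set) satisfies the symmetric exchange axiom. -/
def IsDeltaMatroid (D : SetSystem α) : Prop :=
  D.Fs.Nonempty ∧ (∀ F ∈ D.Fs, F ⊆ D.E) ∧
    ∀ F₁ ∈ D.Fs, ∀ F₂ ∈ D.Fs, ∀ x ∈ F₁ ∆ F₂, ∃ y ∈ F₁ ∆ F₂, F₁ ∆ ({x, y} : Finset α) ∈ D.Fs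

/-- A delta-matroid is even if all its feasible sets have the same parity of size. -/
def IsEven (D : SetSystem α) : Prop :=
  ∀ F₁ ∈ D.Fs, ∀ F₂ ∈ D.Fs, F₁.card % 2 = F₂.card % 2

/-- `e` is a coloop: it belongs to every feasible set. -/
def IsColoop (D : SetSystem α) (e : α) : Prop := ∀ F ∈ D.Fs, e ∈ F

/-- `e` is a loop: it belongs to no feasible set. -/
def IsLoop (D : SetSystem α) (e : α) : Prop := ∀ F ∈ D.Fs, e ∉ F

/-- The underlying deletion operation: keep the feasible sets avoiding `e`. -/
def del₀ (D : SetSystem α) (e : α) : SetSystem α :=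
  ⟨D.E.erase e, {F | F ∈ D.Fs ∧ e ∉ F}⟩

/-- The underlying contraction operation: remove `e` from the feasible sets containing it. -/
def con₀ (D : SetSystem α) (e : α) : SetSystem α :=
  ⟨D.E.erase e, {F | ∃ G ∈ D.Fs, e ∈ G ∧ F = G.erase e}⟩

/-- Deletion `D∖e`: `del₀` if `e` is not a coloop, and `con₀` (= `D/e`) if `e` is a coloop. -/
def delete (D : SetSystem α) (e : α) : SetSystem α :=
  if D.IsColoop e then D.con₀ e else D.del₀ e

/-- Contraction `D/e`: `con₀` if `e` is not a loop, and `del₀` (= `D∖e`) if `e` is a loop. -/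
def contract (D : SetSystem α) (e : α) : SetSystem α :=
  if D.IsLoop e then D.del₀ e else D.con₀ e

/-- The twist `D*A`: replace each feasible set `F` by `F ∆ A`. -/
def twist (D : SetSystem α) (A : Finset α) : SetSystem α :=
  ⟨D.E, {F | ∃ G ∈ D.Fs, F = G ∆ A}⟩

/-- Loop complementation `D+e`. -/
def lcomp (D : SetSystem α) (e : α) : SetSystem α :=
  ⟨D.E, D.Fs ∆ {F | ∃ G ∈ D.Fs, e ∉ G ∧ F = G ∪ {e}}⟩

/-- Loop complementation `D+A` by a set `A = {a₁, …, aₙ}`, defined as the iterated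
single-element loop complementation `D+a₁+⋯+aₙ` (the result is order-independent). -/
def lcompSet (D : SetSystem α) (A : Finset α) : SetSystem α :=
  A.toList.foldl lcomp D

/-- The operation `D ∗̄ A = D+A*A+A`. -/
def starBar (D : SetSystem α) (A : Finset α) : SetSystem α :=
  ((D.lcompSet A).twist A).lcompSet A

/-- The direct sum of two set systems. -/
def directSum (D₁ D₂ : SetSystem α) : SetSystem α :=
  ⟨D₁.E ∪ D₂.E, {F | ∃ F₁ ∈ D₁.Fs, ∃ F₂ ∈ D₂.Fs, F = F₁ ∪ F₂}⟩

/-- `X` is a separator of `D`: `D = D₁ ⊕ D₂` for set systems `D₁`, `D₂` with ground sets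
`X` and `E − X`. -/
def IsSeparator (D : SetSystem α) (X : Finset α) : Prop :=
  X ⊆ D.E ∧ ∃ D₁ D₂ : SetSystem α, D₁.E = X ∧ D₂.E = D.E \ X ∧
    (∀ F ∈ D₁.Fs, F ⊆ D₁.E) ∧ (∀ F ∈ D₂.Fs, F ⊆ D₂.E) ∧ D = D₁.directSum D₂

/-- `D` is connected: it has no proper separator. -/
def Connected (D : SetSystem α) : Prop :=
  ¬ ∃ X, D.IsSeparator X ∧ X.Nonempty ∧ X ≠ D.E

/-- `D'` is a minor of `D`: it is obtained from `D` by a sequence of single-element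
deletions and contractions. -/
inductive MinorOf : SetSystem α → SetSystem α → Prop
  | refl (D : SetSystem α) : MinorOf D D
  | del {D' D : SetSystem α} (e : α) : MinorOf D' D → e ∈ D'.E → MinorOf (D'.delete e) D
  | con {D' D : SetSystem α} (e : α) : MinorOf D' D → e ∈ D'.E → MinorOf (D'.contract e) D

/-- `D'` is a 3-minor of `D`: it is obtained from `D` by a sequence of single-element
deletions, contractions and twist-contractions `D ↦ (D+e)/e`. -/
inductive Minor3Of : SetSystem α → SetSystem α → Prop
  | refl (D : SetSystem α) : Minor3Of D D
  | del {D' D : SetSystem α} (e : α) : Minor3Of D' D → e ∈ D'.E → Minor3Of (D'.delete e) D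
  | con {D' D : SetSystem α} (e : α) : Minor3Of D' D → e ∈ D'.E → Minor3Of (D'.contract e) D
  | tcon {D' D : SetSystem α} (e : α) : Minor3Of D' D → e ∈ D'.E →
      Minor3Of ((D'.lcomp e).contract e) D

/-- `D` is vf-safe: every set system obtained from `D` by a sequence of twists by single
elements and loop complementations is a delta-matroid. -/
inductive TwistLcompReach : SetSystem α → SetSystem α → Prop
  | refl (D : SetSystem α) : TwistLcompReach D D
  | twist {D' D : SetSystem α} (e : α) : TwistLcompReach D' D → e ∈ D'.E →
      TwistLcompReach (D'.twist {e}) D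
  | lcomp {D' D : SetSystem α} (e : α) : TwistLcompReach D' D → e ∈ D'.E →
      TwistLcompReach (D'.lcomp e) D

/-- A vf-safe delta-matroid. -/
def IsVfSafe (D : SetSystem α) : Prop :=
  ∀ D' : SetSystem α, TwistLcompReach D' D → D'.IsDeltaMatroid

end SetSystem

namespace SetSystem

variable {α : Type*} [DecidableEq α]

/-- The basis collection `ℬ` of the 2-matroid `Q₂(D)`: we model the ground set
`U = E ∪ E'` as `E × {0, 1}`, with `e = (e, 0)` and `e' = (e, 1)`; the basis
corresponding to the feasible set `F` is `F ∪ (E − F)'`. -/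
def q2Bases (D : SetSystem α) : Set (Finset (α × Fin 2)) :=
  {B | ∃ F ∈ D.Fs, B = F.image (fun e => (e, (0 : Fin 2)))
    ∪ (D.E \ F).image (fun e => (e, (1 : Fin 2)))}

/-- The closure condition. -/
def ClosedAt (D : SetSystem α) (X : Finset α) : Prop :=
  ∀ F₁ ∈ D.Fs, ∀ F₂ ∈ D.Fs, (F₁ ∩ X ∪ F₂ \ X) ∈ D.Fs

lemma ext' {D₁ D₂ : SetSystem α} (h1 : D₁.E = D₂.E) (h2 : D₁.Fs = D₂.Fs) : D₁ = D₂ := by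
  cases D₁; cases D₂; simp_all

lemma sep_iff_closed (D : SetSystem α) (hsub : ∀ F ∈ D.Fs, F ⊆ D.E)
    (X : Finset α) (hX : X ⊆ D.E) : D.IsSeparator X ↔ D.ClosedAt X := by
  constructor
  · rintro ⟨-, D₁, D₂, hE1, hE2, h1, h2, hDeq⟩
    intro F₁ hF₁ F₂ hF₂
    have hFs : D.Fs = (D₁.directSum D₂).Fs := by rw [hDeq]
    rw [hFs] at hF₁ hF₂ ⊢
    obtain ⟨G₁, hG₁, G₂, hG₂, rfl⟩ := hF₁
    obtain ⟨H₁, hH₁, H₂, hH₂, rfl⟩ := hF₂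
    refine ⟨G₁, hG₁, H₂, hH₂, ?_⟩
    have hg1 : G₁ ⊆ X := hE1 ▸ h1 G₁ hG₁
    have hg2 : G₂ ⊆ D.E \ X := hE2 ▸ h2 G₂ hG₂
    have hh2 : H₂ ⊆ D.E \ X := hE2 ▸ h2 H₂ hH₂
    have hh1 : H₁ ⊆ X := hE1 ▸ h1 H₁ hH₁
    ext a
    have t4 : a ∈ H₁ → a ∈ X := fun h => hh1 h
    have t1 : a ∈ G₁ → a ∈ X := fun h => hg1 h
    have t2 : a ∈ G₂ → a ∈ D.E ∧ a ∉ X := fun h => Finset.mem_sdiff.mp (hg2 h)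
    have t3 : a ∈ H₂ → a ∈ D.E ∧ a ∉ X := fun h => Finset.mem_sdiff.mp (hh2 h)
    simp only [Finset.mem_union, Finset.mem_inter, Finset.mem_sdiff]
    tauto
  · intro hC
    refine ⟨hX, ⟨X, {A | ∃ F ∈ D.Fs, A = F ∩ X}⟩, ⟨D.E \ X, {A | ∃ F ∈ D.Fs, A = F \ X}⟩,
      rfl, rfl, ?_, ?_, ?_⟩
    · rintro A ⟨F, hF, rfl⟩; exact Finset.inter_subset_right
    · rintro A ⟨F, hF, rfl⟩
      intro a ha
      rw [Finset.mem_sdiff] at ha ⊢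
      exact ⟨hsub F hF ha.1, ha.2⟩
    · refine ext' ?_ ?_
      · simp only [directSum]
        rw [Finset.union_sdiff_of_subset hX]
      · ext F
        simp only [directSum, Set.mem_setOf_eq]
        constructor
        · intro hF
          refine ⟨F ∩ X, ⟨F, hF, rfl⟩, F \ X, ⟨F, hF, rfl⟩, ?_⟩
          ext a; simp only [Finset.mem_union, Finset.mem_inter, Finset.mem_sdiff]; tauto
        · rintro ⟨-, ⟨F₁, hF₁, rfl⟩, -, ⟨F₂, hF₂, rfl⟩, rfl⟩
          exact hC F₁ hF₁ F₂ hF₂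

/-- the basis of F -/
def q2b (D : SetSystem α) (F : Finset α) : Finset (α × Fin 2) :=
  F.image (fun e => (e, (0 : Fin 2))) ∪ (D.E \ F).image (fun e => (e, (1 : Fin 2)))

lemma mem_q2b (D : SetSystem α) (F : Finset α) (a : α) (i : Fin 2) :
    (a, i) ∈ D.q2b F ↔ (i = 0 ∧ a ∈ F) ∨ (i = 1 ∧ a ∈ D.E ∧ a ∉ F) := by
  fin_cases i <;>
    simp [q2b, Prod.ext_iff, eq_comm, Fin.ext_iff, and_comm] <;> tauto

lemma q2b_inj (D : SetSystem α) {F G : Finset α} (hF : F ⊆ D.E) (hG : G ⊆ D.E)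
    (h : D.q2b F = D.q2b G) : F = G := by
  ext a
  have := Finset.ext_iff.mp h (a, (0 : Fin 2))
  rw [mem_q2b, mem_q2b] at this
  simpa using this

lemma combo_eq (D : SetSystem α) {F₁ F₂ : Finset α} (h₂ : F₂ ⊆ D.E) (X : Finset α) :
    (D.q2b F₁ ∩ X ×ˢ (Finset.univ : Finset (Fin 2)))
      ∪ (D.q2b F₂ ∩ ((D.E ×ˢ (Finset.univ : Finset (Fin 2)))
          \ (X ×ˢ (Finset.univ : Finset (Fin 2)))))
    = D.q2b (F₁ ∩ X ∪ F₂ \ X) := by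
  ext ⟨a, i⟩
  have hh : a ∈ F₂ → a ∈ D.E := fun h => h₂ h
  simp only [Finset.mem_union, Finset.mem_inter, Finset.mem_sdiff, Finset.mem_product,
    Finset.mem_univ, and_true, mem_q2b]
  fin_cases i <;> simp <;> tauto

lemma closed_iff_split (D : SetSystem α) (hsub : ∀ F ∈ D.Fs, F ⊆ D.E)
    (X : Finset α) (hX : X ⊆ D.E) :
    D.ClosedAt X ↔ D.q2Bases = {C | ∃ B₁ ∈ D.q2Bases, ∃ B₂ ∈ D.q2Bases,
        C = (B₁ ∩ X ×ˢ (Finset.univ : Finset (Fin 2)))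
          ∪ (B₂ ∩ ((D.E ×ˢ (Finset.univ : Finset (Fin 2)))
              \ (X ×ˢ (Finset.univ : Finset (Fin 2)))))} := by
  have hq : D.q2Bases = {B | ∃ F ∈ D.Fs, B = D.q2b F} := rfl
  rw [hq]
  constructor
  · intro hC
    apply Set.Subset.antisymm
    · rintro B ⟨F, hF, rfl⟩
      refine ⟨_, ⟨F, hF, rfl⟩, _, ⟨F, hF, rfl⟩, ?_⟩
      have hFX : F = F ∩ X ∪ F \ X := by
        ext a
        simp only [Finset.mem_union, Finset.mem_inter, Finset.mem_sdiff]
        tauto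
      rw [combo_eq D (hsub F hF) X, ← hFX]
    · rintro C ⟨B₁, ⟨F₁, hF₁, rfl⟩, B₂, ⟨F₂, hF₂, rfl⟩, rfl⟩
      refine ⟨F₁ ∩ X ∪ F₂ \ X, hC F₁ hF₁ F₂ hF₂, ?_⟩
      exact combo_eq D (hsub F₂ hF₂) X
  · intro hsplit F₁ hF₁ F₂ hF₂
    have hmem : (D.q2b F₁ ∩ X ×ˢ (Finset.univ : Finset (Fin 2)))
      ∪ (D.q2b F₂ ∩ ((D.E ×ˢ (Finset.univ : Finset (Fin 2)))
          \ (X ×ˢ (Finset.univ : Finset (Fin 2))))) ∈ {B | ∃ F ∈ D.Fs, B = D.q2b F} := by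
      rw [hsplit]
      exact ⟨D.q2b F₁, ⟨F₁, hF₁, rfl⟩, D.q2b F₂, ⟨F₂, hF₂, rfl⟩, rfl⟩
    rw [combo_eq D (hsub F₂ hF₂) X] at hmem
    obtain ⟨F, hF, hFeq⟩ := hmem
    have hG : F₁ ∩ X ∪ F₂ \ X ⊆ D.E := by
      intro a ha
      rcases Finset.mem_union.mp ha with h | h
      · exact hX (Finset.mem_inter.mp h).2
      · exact hsub F₂ hF₂ (Finset.mem_sdiff.mp h).1
    have := D.q2b_inj hG (hsub F hF) hFeq
    rwa [this]

end SetSystem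

/-- A delta-matroid `D` is connected if and only if there is no proper nonempty union `Y`
of skew classes of `Q₂(D)` splitting the basis collection `ℬ` of `Q₂(D)`: for every `X`
with `∅ ≠ X ≠ E`, letting `Y = {e, e' : e ∈ X}`, the collection `ℬ` is not equal to
`{B₁ ∪ B₂ : B₁ ∈ {B ∩ Y : B ∈ ℬ}, B₂ ∈ {B ∩ (U − Y) : B ∈ ℬ}}`. -/
theorem connected_iff_q2_not_split {α : Type*} [DecidableEq α]
    (D : SetSystem α) (hD : D.IsDeltaMatroid) :
    D.Connected ↔ ∀ X : Finset α, X ⊆ D.E → X.Nonempty → X ≠ D.E →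
      D.q2Bases ≠ {C | ∃ B₁ ∈ D.q2Bases, ∃ B₂ ∈ D.q2Bases,
        C = (B₁ ∩ X ×ˢ (Finset.univ : Finset (Fin 2)))
          ∪ (B₂ ∩ ((D.E ×ˢ (Finset.univ : Finset (Fin 2)))
              \ (X ×ˢ (Finset.univ : Finset (Fin 2)))))} := by
  have hsub := hD.2.1
  constructor
  · intro hconn X hXsub hne hneE heq
    have hC := (D.closed_iff_split hsub X hXsub).mpr heq
    exact hconn ⟨X, (D.sep_iff_closed hsub X hXsub).mpr hC, hne, hneE⟩
  · rintro h ⟨X, hsep, hne, hneE⟩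
    have hXsub := hsep.1
    have hC := (D.sep_iff_closed hsub X hXsub).mp hsep
    exact h X hXsub hne hneE ((D.closed_iff_split hsub X hXsub).mp hC)
end
end

section
/- Let Q = (U, Ω, r) be a multimatroid and let A be a subtransversal of Ω. Let Ω' be the set of skew classes of Ω disjoint from A, let U' be the union of the members of Ω', and define r'(X) = r(X ∪ A) − r(A) for every subtransversal X of Ω'. Then (U', Ω', r') is a multimatroid, i.e., r' satisfies axioms (1)–(4) of the definition of a multimatroid. -/
noncomputable section
open scoped Classical

/-- The data of a multimatroid: a finite ground set `U`, a partition `Ω` of `U` into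
nonempty skew classes, and a rank function `r` (only its values on subtransversals matter). -/
structure MultimatroidData (α : Type*) [DecidableEq α] where
  U : Finset α
  Ω : Finset (Finset α)
  r : Finset α → ℕ
  classes_nonempty : ∀ ω ∈ Ω, ω.Nonempty
  classes_subset : ∀ ω ∈ Ω, ω ⊆ U
  classes_cover : ∀ x ∈ U, ∃ ω ∈ Ω, x ∈ ω
  classes_disjoint : ∀ ω₁ ∈ Ω, ∀ ω₂ ∈ Ω, ω₁ ≠ ω₂ → Disjoint ω₁ ω₂

variable {α : Type*} [DecidableEq α]

/-- A subtransversal: a set meeting each skew class in at most one element. -/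
def MultimatroidData.Subtr (Q : MultimatroidData α) (A : Finset α) : Prop :=
  A ⊆ Q.U ∧ ∀ ω ∈ Q.Ω, (A ∩ ω).card ≤ 1

/-- A multimatroid: the rank function satisfies axioms (1)–(4). -/
structure Multimatroid (α : Type*) [DecidableEq α] extends MultimatroidData α where
  rank_empty : r ∅ = 0
  rank_step : ∀ A x ω, toMultimatroidData.Subtr A → ω ∈ Ω → x ∈ ω → Disjoint ω A →
    r A ≤ r (insert x A) ∧ r (insert x A) ≤ r A + 1
  rank_submod : ∀ A B, toMultimatroidData.Subtr (A ∪ B) →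
    r (A ∪ B) + r (A ∩ B) ≤ r A + r B
  rank_skew : ∀ A x y ω, toMultimatroidData.Subtr A → ω ∈ Ω → x ∈ ω → y ∈ ω → x ≠ y →
    Disjoint ω A → 2 * r A + 1 ≤ r (insert x A) + r (insert y A)

namespace Multimatroid

variable (Q : Multimatroid α)

/-- Subtransversals of a multimatroid. -/
def Subtr (A : Finset α) : Prop := Q.toMultimatroidData.Subtr A

/-- The skew classes of the minor `Q|A`: those skew classes of `Q` disjoint from `A`. -/
def minorClasses (A : Finset α) : Finset (Finset α) := Q.Ω.filter fun ω => Disjoint ω A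

/-- The ground set of the minor `Q|A`. -/
def minorGround (A : Finset α) : Finset α := (Q.minorClasses A).biUnion id

/-- Subtransversals of the minor `Q|A`. -/
def MinorSubtr (A S : Finset α) : Prop :=
  S ⊆ Q.minorGround A ∧ ∀ ω ∈ Q.minorClasses A, (S ∩ ω).card ≤ 1

/-- `X` is a separator of the minor `Q|A` (whose rank function is
`S ↦ r(S ∪ A) − r(A)`, here expressed additively). -/
def IsMinorSeparator (A X : Finset α) : Prop :=
  X ⊆ Q.minorGround A ∧ (∀ ω ∈ Q.minorClasses A, ω ⊆ X ∨ Disjoint ω X) ∧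
  ∀ S, Q.MinorSubtr A S →
    Q.r (S ∪ A) + Q.r A = Q.r ((S ∩ X) ∪ A) + Q.r ((S \ X) ∪ A)

/-- The minor `Q|A` is connected: it has no proper separator. -/
def MinorConnected (A : Finset α) : Prop :=
  ¬ ∃ X, Q.IsMinorSeparator A X ∧ X.Nonempty ∧ X ≠ Q.minorGround A

/-- `X` is a separator of `Q`: a union of skew classes such that the rank is additive
over the partition `(X, U − X)`. -/
def IsSeparator (X : Finset α) : Prop :=
  X ⊆ Q.U ∧ (∀ ω ∈ Q.Ω, ω ⊆ X ∨ Disjoint ω X) ∧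
  ∀ S, Q.Subtr S → Q.r S = Q.r (S ∩ X) + Q.r (S \ X)

/-- `Q` is connected: it has no proper separator. -/
def Connected : Prop := ¬ ∃ X, Q.IsSeparator X ∧ X.Nonempty ∧ X ≠ Q.U

/-- `A` is a near-transversal avoiding the skew class `ω`: a subtransversal disjoint
from `ω` meeting every other skew class. -/
def NearTransversalAvoiding (ω A : Finset α) : Prop :=
  Q.Subtr A ∧ Disjoint A ω ∧ ∀ ω' ∈ Q.Ω, ω' ≠ ω → (A ∩ ω').Nonempty

/-- A multimatroid is non-degenerate if every skew class has at least two elements. -/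
def Nondegenerate : Prop := ∀ ω ∈ Q.Ω, 2 ≤ ω.card

/-- A multimatroid is tight if it is non-degenerate and for every skew class `ω` and
every near-transversal `A` avoiding `ω`, `Σ_{x∈ω} (r(A∪x) − r(A)) = |ω| − 1`. -/
def Tight : Prop :=
  Q.Nondegenerate ∧ ∀ ω ∈ Q.Ω, ∀ A, Q.NearTransversalAvoiding ω A →
    ∑ x ∈ ω, (Q.r (insert x A) - Q.r A) = ω.card - 1

/-- An independent set: a subtransversal whose rank equals its cardinality. -/
def Indep (S : Finset α) : Prop := Q.Subtr S ∧ Q.r S = S.card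

/-- A basis: a maximal independent set. -/
def IsBasis (B : Finset α) : Prop := Q.Indep B ∧ ∀ S, Q.Indep S → B ⊆ S → S = B

/-- A circuit: a dependent subtransversal all of whose proper subsets are independent. -/
def IsCircuit (C : Finset α) : Prop :=
  Q.Subtr C ∧ Q.r C ≠ C.card ∧ ∀ C' ⊂ C, Q.r C' = C'.card

end Multimatroid

namespace Multimatroid

lemma subtr_mono' (Q : Multimatroid α) {B C : Finset α} (hB : Q.Subtr B) (h : C ⊆ B) :
    Q.Subtr C := by
  refine ⟨h.trans hB.1, fun ω hω => ?_⟩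
  exact le_trans (Finset.card_le_card (Finset.inter_subset_inter_right h)) (hB.2 ω hω)

lemma rank_mono_aux (Q : Multimatroid α) :
    ∀ n (B C : Finset α), (B \ C).card = n → Q.Subtr B → C ⊆ B → Q.r C ≤ Q.r B := by
  intro n
  induction n with
  | zero =>
    intro B C h hB hCB
    have : B \ C = ∅ := Finset.card_eq_zero.mp h
    have : B ⊆ C := fun x hx => by
      by_contra hxC
      exact absurd (Finset.mem_sdiff.mpr ⟨hx, hxC⟩) (by simp [this])
    rw [Finset.Subset.antisymm hCB this]
  | succ n ih =>
    intro B C h hB hCB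
    have hne : (B \ C).Nonempty := by rw [← Finset.card_pos, h]; omega
    obtain ⟨x, hx⟩ := hne
    rw [Finset.mem_sdiff] at hx
    obtain ⟨ω, hωΩ, hxω⟩ := Q.classes_cover x (hB.1 hx.1)
    have hdisj : Disjoint ω C := by
      rw [Finset.disjoint_left]
      intro y hyω hyC
      have hcard := hB.2 ω hωΩ
      have hx' : x ∈ B ∩ ω := Finset.mem_inter.mpr ⟨hx.1, hxω⟩
      have hy' : y ∈ B ∩ ω := Finset.mem_inter.mpr ⟨hCB hyC, hyω⟩
      have := Finset.card_le_one.mp hcard x hx' y hy'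
      exact hx.2 (this ▸ hyC)
    have hstep := Q.rank_step C x ω (Q.subtr_mono' hB hCB) hωΩ hxω hdisj
    have hsub : insert x C ⊆ B := Finset.insert_subset hx.1 hCB
    have hcard : (B \ insert x C).card = n := by
      have : B \ insert x C = (B \ C).erase x := by
        ext z; simp [Finset.mem_sdiff, Finset.mem_erase]; tauto
      rw [this, Finset.card_erase_of_mem (Finset.mem_sdiff.mpr hx), h]; omega
    exact le_trans hstep.1 (ih B (insert x C) hcard hB hsub)

lemma rank_mono (Q : Multimatroid α) {B C : Finset α} (hB : Q.Subtr B) (h : C ⊆ B) :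
    Q.r C ≤ Q.r B :=
  Q.rank_mono_aux (B \ C).card B C rfl hB h

lemma minorGround_subset (Q : Multimatroid α) (A : Finset α) : Q.minorGround A ⊆ Q.U := by
  intro x hx
  simp only [minorGround, Finset.mem_biUnion, id] at hx
  obtain ⟨ω, hω, hx⟩ := hx
  exact Q.classes_subset ω (Finset.mem_filter.mp hω).1 hx

lemma minorSubtr_union (Q : Multimatroid α) {A S : Finset α} (hA : Q.Subtr A)
    (hS : Q.MinorSubtr A S) : Q.Subtr (S ∪ A) := by
  constructor
  · exact Finset.union_subset (hS.1.trans (Q.minorGround_subset A)) hA.1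
  · intro ω hω
    by_cases hd : Disjoint ω A
    · have hωm : ω ∈ Q.minorClasses A := Finset.mem_filter.mpr ⟨hω, hd⟩
      have hAω : A ∩ ω = ∅ := by
        rw [← Finset.disjoint_iff_inter_eq_empty]; exact hd.symm
      rw [Finset.union_inter_distrib_right, hAω, Finset.union_empty]
      exact hS.2 ω hωm
    · have hSω : S ∩ ω = ∅ := by
        rw [← Finset.disjoint_iff_inter_eq_empty, Finset.disjoint_right]
        intro y hyω hyS
        have := hS.1 hyS
        simp only [minorGround, Finset.mem_biUnion, id] at this
        obtain ⟨ω', hω', hyω'⟩ := this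
        rw [minorClasses, Finset.mem_filter] at hω'
        rcases eq_or_ne ω' ω with rfl | hne
        · exact hd hω'.2
        · exact (Finset.disjoint_left.mp (Q.classes_disjoint ω' hω'.1 ω hω hne) hyω') hyω
      rw [Finset.union_inter_distrib_right, hSω, Finset.empty_union]
      exact hA.2 ω hω

end Multimatroid

/-- Let `Q = (U, Ω, r)` be a multimatroid and `A` a subtransversal. With `Ω'` the skew
classes of `Q` disjoint from `A`, `U'` their union, and `r'(X) = r(X ∪ A) − r(A)` for
subtransversals `X` of `Ω'`, the triple `(U', Ω', r')` is a multimatroid: `r'` satisfies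
axioms (1)–(4) of the definition of a multimatroid. -/
theorem minor_is_multimatroid {α : Type*} [DecidableEq α]
    (Q : Multimatroid α) (A : Finset α) (hA : Q.Subtr A) :
    -- axiom (1)
    (Q.r (∅ ∪ A) - Q.r A = 0) ∧
    -- axiom (2)
    (∀ S x ω, Q.MinorSubtr A S → ω ∈ Q.minorClasses A → x ∈ ω → Disjoint ω S →
      Q.r (S ∪ A) - Q.r A ≤ Q.r (insert x S ∪ A) - Q.r A ∧
      Q.r (insert x S ∪ A) - Q.r A ≤ (Q.r (S ∪ A) - Q.r A) + 1) ∧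
    -- axiom (3)
    (∀ S T, Q.MinorSubtr A (S ∪ T) →
      (Q.r ((S ∪ T) ∪ A) - Q.r A) + (Q.r ((S ∩ T) ∪ A) - Q.r A) ≤
        (Q.r (S ∪ A) - Q.r A) + (Q.r (T ∪ A) - Q.r A)) ∧
    -- axiom (4)
    (∀ S x y ω, Q.MinorSubtr A S → ω ∈ Q.minorClasses A → x ∈ ω → y ∈ ω → x ≠ y →
      Disjoint ω S →
      2 * (Q.r (S ∪ A) - Q.r A) + 1 ≤
        (Q.r (insert x S ∪ A) - Q.r A) + (Q.r (insert y S ∪ A) - Q.r A)) := by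
  classical
  have hground := Q.minorGround_subset A
  refine ⟨by simp, ?_, ?_, ?_⟩
  · intro S x ω hS hω hx hdS
    have hωΩ : ω ∈ Q.Ω := (Finset.mem_filter.mp hω).1
    have hωA : Disjoint ω A := (Finset.mem_filter.mp hω).2
    have hSA : Q.Subtr (S ∪ A) := Q.minorSubtr_union hA hS
    have hd : Disjoint ω (S ∪ A) := Finset.disjoint_union_right.mpr ⟨hdS, hωA⟩
    have hstep := Q.rank_step (S ∪ A) x ω hSA hωΩ hx hd
    have heq : insert x S ∪ A = insert x (S ∪ A) := Finset.insert_union x S A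
    have hmono : Q.r A ≤ Q.r (S ∪ A) :=
      Q.rank_mono hSA Finset.subset_union_right
    rw [heq]
    omega
  · intro S T hST
    have hB : Q.Subtr ((S ∪ T) ∪ A) := Q.minorSubtr_union hA hST
    have h1 : (S ∪ A) ∪ (T ∪ A) = (S ∪ T) ∪ A := by
      ext z; simp; tauto
    have h2 : (S ∪ A) ∩ (T ∪ A) = (S ∩ T) ∪ A := by
      ext z; simp; tauto
    have hsub := Q.rank_submod (S ∪ A) (T ∪ A) (by rw [h1]; exact hB)
    rw [h1, h2] at hsub
    have sub1 : (S ∩ T) ∪ A ⊆ (S ∪ T) ∪ A :=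
      Finset.union_subset_union_left (Finset.inter_subset_left.trans Finset.subset_union_left)
    have sub2 : S ∪ A ⊆ (S ∪ T) ∪ A :=
      Finset.union_subset_union_left Finset.subset_union_left
    have sub3 : T ∪ A ⊆ (S ∪ T) ∪ A :=
      Finset.union_subset_union_left Finset.subset_union_right
    have m1 : Q.r A ≤ Q.r ((S ∩ T) ∪ A) :=
      Q.rank_mono (Q.subtr_mono' hB sub1) Finset.subset_union_right
    have m2 : Q.r A ≤ Q.r (S ∪ A) :=
      Q.rank_mono (Q.subtr_mono' hB sub2) Finset.subset_union_right
    have m3 : Q.r A ≤ Q.r (T ∪ A) :=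
      Q.rank_mono (Q.subtr_mono' hB sub3) Finset.subset_union_right
    have m0 : Q.r A ≤ Q.r ((S ∪ T) ∪ A) := Q.rank_mono hB Finset.subset_union_right
    zify [m0, m1, m2, m3]
    omega
  · intro S x y ω hS hω hx hy hxy hdS
    have hωΩ : ω ∈ Q.Ω := (Finset.mem_filter.mp hω).1
    have hωA : Disjoint ω A := (Finset.mem_filter.mp hω).2
    have hSA : Q.Subtr (S ∪ A) := Q.minorSubtr_union hA hS
    have hd : Disjoint ω (S ∪ A) := Finset.disjoint_union_right.mpr ⟨hdS, hωA⟩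
    have hskew := Q.rank_skew (S ∪ A) x y ω hSA hωΩ hx hy hxy hd
    have hstepx := Q.rank_step (S ∪ A) x ω hSA hωΩ hx hd
    have hstepy := Q.rank_step (S ∪ A) y ω hSA hωΩ hy hd
    have heqx : insert x S ∪ A = insert x (S ∪ A) := Finset.insert_union x S A
    have heqy : insert y S ∪ A = insert y (S ∪ A) := Finset.insert_union y S A
    have hmono : Q.r A ≤ Q.r (S ∪ A) :=
      Q.rank_mono hSA Finset.subset_union_right
    rw [heqx, heqy]
    omega
end
end

section
/- Let Q be a non-degenerate multimatroid, let B be a basis of Q and let ω be a skew class of Q. Then there is at most one circuit C of Q with C ⊆ B ∪ ω. Furthermore, if Q is tight, then there is exactly one circuit C of Q with C ⊆ B ∪ ω. -/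
noncomputable section
open scoped Classical

variable {α : Type*} [DecidableEq α]

namespace Multimatroid

variable {α : Type*} [DecidableEq α] (Q : Multimatroid α)

lemma subtr_of_subset {S T : Finset α} (hS : Q.Subtr S) (hT : T ⊆ S) : Q.Subtr T :=
  ⟨hT.trans hS.1, fun ω hω =>
    le_trans (Finset.card_le_card (Finset.inter_subset_inter hT (Finset.Subset.refl ω)))
      (hS.2 ω hω)⟩

lemma subtr_insert {A ω : Finset α} {x : α} (hA : Q.Subtr A) (hω : ω ∈ Q.Ω) (hx : x ∈ ω)
    (hdisj : Disjoint ω A) : Q.Subtr (insert x A) := by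
  constructor
  · exact Finset.insert_subset (Q.classes_subset ω hω hx) hA.1
  · intro ω' hω'
    by_cases h : ω' = ω
    · subst h
      have hAω : A ∩ ω' = ∅ := by
        rw [Finset.eq_empty_iff_forall_notMem]
        intro a ha
        obtain ⟨h1, h2⟩ := Finset.mem_inter.1 ha
        exact (Finset.disjoint_right.1 hdisj h1) h2
      have : insert x A ∩ ω' ⊆ {x} := by
        intro a ha
        obtain ⟨h1, h2⟩ := Finset.mem_inter.1 ha
        rcases Finset.mem_insert.1 h1 with h | h
        · simp [h]
        · exact absurd (Finset.mem_inter.2 ⟨h, h2⟩) (by simp [hAω])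
      calc (insert x A ∩ ω').card ≤ ({x} : Finset α).card := Finset.card_le_card this
        _ = 1 := Finset.card_singleton x
    · have hxω' : x ∉ ω' := fun hmem =>
        (Finset.disjoint_left.1 (Q.classes_disjoint ω' hω' ω hω h) hmem) hx
      have : insert x A ∩ ω' = A ∩ ω' := by
        ext a
        simp only [Finset.mem_inter, Finset.mem_insert]
        constructor
        · rintro ⟨h1 | h1, h2⟩
          · exact absurd (h1 ▸ h2) hxω'
          · exact ⟨h1, h2⟩
        · rintro ⟨h1, h2⟩; exact ⟨Or.inr h1, h2⟩
      rw [this]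
      exact hA.2 ω' hω'

lemma rank_insert_bounds {S T : Finset α} {x : α} (hS : Q.Subtr S) (hT : T ⊆ S)
    (hx : x ∈ S) (hxT : x ∉ T) :
    Q.r T ≤ Q.r (insert x T) ∧ Q.r (insert x T) ≤ Q.r T + 1 := by
  obtain ⟨ω, hω, hxω⟩ := Q.classes_cover x (hS.1 hx)
  have hdisj : Disjoint ω T := by
    rw [Finset.disjoint_left]
    intro a haω haT
    have h1 : a ∈ S ∩ ω := Finset.mem_inter.2 ⟨hT haT, haω⟩
    have h2 : x ∈ S ∩ ω := Finset.mem_inter.2 ⟨hx, hxω⟩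
    have hcard := hS.2 ω hω
    have hax : a = x := by
      by_contra hne
      have : 1 < (S ∩ ω).card := Finset.one_lt_card.2 ⟨a, h1, x, h2, hne⟩
      omega
    exact hxT (hax ▸ haT)
  exact Q.rank_step T x ω (Q.subtr_of_subset hS hT) hω hxω hdisj

lemma rank_between {S : Finset α} (hS : Q.Subtr S) :
    ∀ n (T : Finset α), T ⊆ S → (S \ T).card = n →
      Q.r T ≤ Q.r S ∧ Q.r S ≤ Q.r T + n := by
  intro n
  induction n with
  | zero =>
    intro T hT hc
    have hempty : S \ T = ∅ := Finset.card_eq_zero.1 hc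
    have hST : S ⊆ T := fun a ha => by
      by_contra h
      exact absurd (Finset.mem_sdiff.2 ⟨ha, h⟩) (by simp [hempty])
    have : T = S := Finset.Subset.antisymm hT hST
    subst this
    exact ⟨le_refl _, by omega⟩
  | succ n ih =>
    intro T hT hc
    have hne : (S \ T).Nonempty := by rw [← Finset.card_pos, hc]; omega
    obtain ⟨x, hx⟩ := hne
    obtain ⟨hxS, hxT⟩ := Finset.mem_sdiff.1 hx
    have hT' : insert x T ⊆ S := Finset.insert_subset hxS hT
    have hc' : (S \ insert x T).card = n := by
      have heq : S \ insert x T = (S \ T).erase x := by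
        ext a
        simp only [Finset.mem_sdiff, Finset.mem_erase, Finset.mem_insert]
        tauto
      rw [heq, Finset.card_erase_of_mem hx, hc]; omega
    obtain ⟨h1, h2⟩ := ih (insert x T) hT' hc'
    obtain ⟨h3, h4⟩ := Q.rank_insert_bounds hS hT hxS hxT
    exact ⟨le_trans h3 h1, by omega⟩

lemma rank_le_card {S : Finset α} (hS : Q.Subtr S) : Q.r S ≤ S.card := by
  have := (Q.rank_between hS (S \ ∅).card ∅ (Finset.empty_subset S) rfl).2
  simpa [Q.rank_empty] using this

lemma indep_of_subset {S T : Finset α} (hS : Q.Indep S) (hT : T ⊆ S) : Q.Indep T := by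
  have hsub := Q.subtr_of_subset hS.1 hT
  have h1 := Q.rank_le_card hsub
  have h2 := (Q.rank_between hS.1 (S \ T).card T hT rfl).2
  have hcard : (S \ T).card = S.card - T.card := Finset.card_sdiff_of_subset hT
  have hle := Finset.card_le_card hT
  have h3 := hS.2
  exact ⟨hsub, by omega⟩

lemma circuit_rank {C : Finset α} (hC : Q.IsCircuit C) : Q.r C + 1 = C.card := by
  obtain ⟨hsub, hne, hmin⟩ := hC
  have hle := Q.rank_le_card hsub
  have hCne : C.Nonempty := by
    rcases Finset.eq_empty_or_nonempty C with h | h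
    · exact absurd (by simp [h, Q.rank_empty]) hne
    · exact h
  obtain ⟨x, hx⟩ := hCne
  have hss : C.erase x ⊂ C := Finset.erase_ssubset hx
  have h1 := hmin _ hss
  have h2 := (Q.rank_between hsub (C \ C.erase x).card (C.erase x) (Finset.erase_subset x C) rfl).1
  have h3 : (C.erase x).card = C.card - 1 := Finset.card_erase_of_mem hx
  have h4 : 1 ≤ C.card := Finset.card_pos.2 ⟨x, hx⟩
  omega

lemma exists_circuit_of_dep : ∀ S : Finset α, Q.Subtr S → Q.r S ≠ S.card →
    ∃ C ⊆ S, Q.IsCircuit C := by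
  intro S
  induction S using Finset.strongInduction with
  | _ S ih =>
    intro hS hdep
    by_cases h : ∀ C' ⊂ S, Q.r C' = C'.card
    · exact ⟨S, Finset.Subset.refl S, hS, hdep, h⟩
    · push_neg at h
      obtain ⟨C', hC'sub, hC'dep⟩ := h
      obtain ⟨C, hCsub, hC⟩ := ih C' hC'sub (Q.subtr_of_subset hS hC'sub.subset) hC'dep
      exact ⟨C, hCsub.trans hC'sub.subset, hC⟩

lemma basis_meets (hnd : Q.Nondegenerate) {B : Finset α} (hB : Q.IsBasis B)
    {ω : Finset α} (hω : ω ∈ Q.Ω) : (B ∩ ω).Nonempty := by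
  by_contra h
  have hdisj : Disjoint ω B := by
    rw [Finset.disjoint_left]
    intro a haω haB
    exact h ⟨a, Finset.mem_inter.2 ⟨haB, haω⟩⟩
  obtain ⟨x, hx, y, hy, hxy⟩ := Finset.one_lt_card.1 (hnd ω hω)
  have hskew := Q.rank_skew B x y ω hB.1.1 hω hx hy hxy hdisj
  have hxB : x ∉ B := fun hmem => (Finset.disjoint_left.1 hdisj hx) hmem
  have hyB : y ∉ B := fun hmem => (Finset.disjoint_left.1 hdisj hy) hmem
  have hsx : Q.Subtr (insert x B) := Q.subtr_insert hB.1.1 hω hx hdisj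
  have hsy : Q.Subtr (insert y B) := Q.subtr_insert hB.1.1 hω hy hdisj
  have h1 := Q.rank_le_card hsx
  have h2 := Q.rank_le_card hsy
  rw [Finset.card_insert_of_notMem hxB] at h1
  rw [Finset.card_insert_of_notMem hyB] at h2
  have hrB := hB.1.2
  have hcase : Q.r (insert x B) = B.card + 1 ∨ Q.r (insert y B) = B.card + 1 := by omega
  rcases hcase with hc | hc
  · have hind : Q.Indep (insert x B) :=
      ⟨hsx, by rw [hc, Finset.card_insert_of_notMem hxB]⟩
    have := hB.2 _ hind (Finset.subset_insert x B)
    exact hxB (this ▸ Finset.mem_insert_self x B)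
  · have hind : Q.Indep (insert y B) :=
      ⟨hsy, by rw [hc, Finset.card_insert_of_notMem hyB]⟩
    have := hB.2 _ hind (Finset.subset_insert y B)
    exact hyB (this ▸ Finset.mem_insert_self y B)

end Multimatroid

/-- Let `Q` be a non-degenerate multimatroid, `B` a basis of `Q` and `ω` a skew class.
Then `B ∪ ω` contains at most one circuit of `Q`; and if `Q` is tight, it contains
exactly one circuit of `Q` (the fundamental circuit of `Q` with respect to `B` and `ω`). -/
theorem fundamental_circuit {α : Type*} [DecidableEq α]
    (Q : Multimatroid α) (hnd : Q.Nondegenerate)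
    (B : Finset α) (hB : Q.IsBasis B) (ω : Finset α) (hω : ω ∈ Q.Ω) :
    (∀ C₁ C₂, Q.IsCircuit C₁ → C₁ ⊆ B ∪ ω → Q.IsCircuit C₂ → C₂ ⊆ B ∪ ω → C₁ = C₂) ∧
    (Q.Tight → ∃ C, Q.IsCircuit C ∧ C ⊆ B ∪ ω) := by
  obtain ⟨b, hb⟩ := Q.basis_meets hnd hB hω
  obtain ⟨hbB, hbω⟩ := Finset.mem_inter.1 hb
  set A := B.erase b with hAdef
  have hAB : A ⊆ B := Finset.erase_subset b B
  have hBωcard := hB.1.1.2 ω hω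
  have hBω : ∀ a ∈ B, a ∈ ω → a = b := by
    intro a haB haω
    by_contra hne
    have : 1 < (B ∩ ω).card :=
      Finset.one_lt_card.2 ⟨a, Finset.mem_inter.2 ⟨haB, haω⟩, b, hb, hne⟩
    omega
  have hdisjA : Disjoint ω A := by
    rw [Finset.disjoint_right]
    intro a haA haω
    obtain ⟨hab, haB⟩ := Finset.mem_erase.1 haA
    exact hab (hBω a haB haω)
  have hAind : Q.Indep A := Q.indep_of_subset hB.1 hAB
  have hbA : b ∉ A := fun h => (Finset.mem_erase.1 h).1 rfl
  have hAcard : A.card + 1 = B.card := by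
    rw [hAdef, Finset.card_erase_of_mem hbB]
    have := Finset.card_pos.2 ⟨b, hbB⟩
    omega
  -- key fact about circuits contained in B ∪ ω
  have key : ∀ C, Q.IsCircuit C → C ⊆ B ∪ ω →
      ∃ x ∈ ω, x ∈ C ∧ C ⊆ insert x A ∧ Q.r (insert x A) = Q.r A := by
    intro C hC hCsub
    have hCdep : Q.r C ≠ C.card := hC.2.1
    have hCωne : (C ∩ ω).Nonempty := by
      by_contra h
      rw [Finset.not_nonempty_iff_eq_empty] at h
      have hCB : C ⊆ B := by
        intro a ha
        rcases Finset.mem_union.1 (hCsub ha) with h1 | h1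
        · exact h1
        · exact absurd (Finset.mem_inter.2 ⟨ha, h1⟩) (by simp [h])
      exact hCdep (Q.indep_of_subset hB.1 hCB).2
    obtain ⟨x, hx⟩ := hCωne
    obtain ⟨hxC, hxω⟩ := Finset.mem_inter.1 hx
    have hCωcard := hC.1.2 ω hω
    have hCω : ∀ a ∈ C, a ∈ ω → a = x := by
      intro a haC haω
      by_contra hne
      have : 1 < (C ∩ ω).card :=
        Finset.one_lt_card.2 ⟨a, Finset.mem_inter.2 ⟨haC, haω⟩, x, hx, hne⟩
      omega
    have hxb : x ≠ b := by
      intro h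
      subst h
      have hCB : C ⊆ B := by
        intro a ha
        rcases Finset.mem_union.1 (hCsub ha) with h1 | h1
        · exact h1
        · rw [hCω a ha h1]; exact hbB
      exact hCdep (Q.indep_of_subset hB.1 hCB).2
    have hCiA : C ⊆ insert x A := by
      intro a ha
      by_cases hax : a = x
      · exact hax ▸ Finset.mem_insert_self x A
      · have haω : a ∉ ω := fun h => hax (hCω a ha h)
        have haB : a ∈ B := by
          rcases Finset.mem_union.1 (hCsub ha) with h1 | h1
          · exact h1
          · exact absurd h1 haω
        have hab : a ≠ b := fun h => haω (h ▸ hbω)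
        exact Finset.mem_insert_of_mem (Finset.mem_erase.2 ⟨hab, haB⟩)
    have hsub : Q.Subtr (insert x A) := Q.subtr_insert hAind.1 hω hxω hdisjA
    have hxA : x ∉ A := Finset.disjoint_left.1 hdisjA hxω
    have hcard : (insert x A).card = A.card + 1 := Finset.card_insert_of_notMem hxA
    have hrlt : Q.r (insert x A) ≠ (insert x A).card := by
      intro h
      exact hCdep (Q.indep_of_subset ⟨hsub, h⟩ hCiA).2
    have hle := Q.rank_le_card hsub
    have hmono := (Q.rank_insert_bounds hsub (Finset.subset_insert x A)
      (Finset.mem_insert_self x A) hxA).1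
    refine ⟨x, hxω, hxC, hCiA, ?_⟩
    have h3 := hAind.2
    omega
  constructor
  · -- uniqueness
    intro C₁ C₂ hC₁ hs₁ hC₂ hs₂
    obtain ⟨x₁, hx₁ω, hx₁C, hC₁sub, hr₁⟩ := key C₁ hC₁ hs₁
    obtain ⟨x₂, hx₂ω, hx₂C, hC₂sub, hr₂⟩ := key C₂ hC₂ hs₂
    have hxeq : x₁ = x₂ := by
      by_contra hne
      have := Q.rank_skew A x₁ x₂ ω hAind.1 hω hx₁ω hx₂ω hne hdisjA
      omega
    subst hxeq
    by_contra hne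
    have hx₁A : x₁ ∉ A := Finset.disjoint_left.1 hdisjA hx₁ω
    have hsubiA : Q.Subtr (insert x₁ A) := Q.subtr_insert hAind.1 hω hx₁ω hdisjA
    have hUsub : C₁ ∪ C₂ ⊆ insert x₁ A := Finset.union_subset hC₁sub hC₂sub
    have hUsubtr : Q.Subtr (C₁ ∪ C₂) := Q.subtr_of_subset hsubiA hUsub
    have hsubmod := Q.rank_submod C₁ C₂ hUsubtr
    have hcr₁ := Q.circuit_rank hC₁
    have hcr₂ := Q.circuit_rank hC₂
    -- C₁ ∩ C₂ is a proper subset of C₁ or of C₂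
    have hInt : Q.r (C₁ ∩ C₂) = (C₁ ∩ C₂).card := by
      by_cases h12 : C₁ ⊆ C₂
      · have hss : C₁ ⊂ C₂ := Finset.ssubset_iff_subset_ne.2 ⟨h12, hne⟩
        have := hC₂.2.2 C₁ hss
        omega
      · have hss : C₁ ∩ C₂ ⊂ C₁ := by
          refine Finset.ssubset_iff_subset_ne.2 ⟨Finset.inter_subset_left, ?_⟩
          intro h
          exact h12 (by rw [← h]; exact Finset.inter_subset_right)
        exact hC₁.2.2 _ hss
    -- lower bound on r(C₁ ∪ C₂)
    have hxU : x₁ ∈ C₁ ∪ C₂ := Finset.mem_union_left _ hx₁C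
    have hDsub : (C₁ ∪ C₂).erase x₁ ⊆ A := by
      intro a ha
      obtain ⟨hax, haU⟩ := Finset.mem_erase.1 ha
      rcases Finset.mem_insert.1 (hUsub haU) with h | h
      · exact absurd h hax
      · exact h
    have hDind : Q.Indep ((C₁ ∪ C₂).erase x₁) := Q.indep_of_subset hAind hDsub
    have hDcard : ((C₁ ∪ C₂).erase x₁).card = (C₁ ∪ C₂).card - 1 :=
      Finset.card_erase_of_mem hxU
    have hDmono := (Q.rank_between hUsubtr ((C₁ ∪ C₂) \ (C₁ ∪ C₂).erase x₁).card
      ((C₁ ∪ C₂).erase x₁) (Finset.erase_subset _ _) rfl).1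
    have hD := hDind.2
    have hcards := Finset.card_union_add_card_inter C₁ C₂
    have hUpos : 1 ≤ (C₁ ∪ C₂).card := Finset.card_pos.2 ⟨x₁, hxU⟩
    omega
  · -- existence, assuming tightness
    rintro ⟨_, htight⟩
    have hNT : Q.NearTransversalAvoiding ω A := by
      refine ⟨hAind.1, hdisjA.symm, ?_⟩
      intro ω' hω' hne
      obtain ⟨c, hc⟩ := Q.basis_meets hnd hB hω'
      obtain ⟨hcB, hcω'⟩ := Finset.mem_inter.1 hc
      have hcb : c ≠ b := by
        intro h
        subst h
        exact (Finset.disjoint_left.1 (Q.classes_disjoint ω' hω' ω hω hne) hcω') hbω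
      exact ⟨c, Finset.mem_inter.2 ⟨Finset.mem_erase.2 ⟨hcb, hcB⟩, hcω'⟩⟩
    have hsum := htight ω hω A hNT
    have hωcard := hnd ω hω
    have hex : ∃ x ∈ ω, Q.r (insert x A) ≤ Q.r A := by
      by_contra h
      push_neg at h
      have hlb : ∀ x ∈ ω, 1 ≤ Q.r (insert x A) - Q.r A := fun x hx => by
        have := h x hx; omega
      have := Finset.card_nsmul_le_sum ω (fun x => Q.r (insert x A) - Q.r A) 1 hlb
      simp only [smul_eq_mul, mul_one] at this
      omega
    obtain ⟨x, hxω, hxle⟩ := hex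
    have hxA : x ∉ A := Finset.disjoint_left.1 hdisjA hxω
    have hsub : Q.Subtr (insert x A) := Q.subtr_insert hAind.1 hω hxω hdisjA
    have hmono := (Q.rank_insert_bounds hsub (Finset.subset_insert x A)
      (Finset.mem_insert_self x A) hxA).1
    have hdep : Q.r (insert x A) ≠ (insert x A).card := by
      rw [Finset.card_insert_of_notMem hxA]
      have := hAind.2
      omega
    obtain ⟨C, hCsub, hC⟩ := Q.exists_circuit_of_dep (insert x A) hsub hdep
    refine ⟨C, hC, hCsub.trans ?_⟩
    intro a ha
    rcases Finset.mem_insert.1 ha with h | h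
    · exact Finset.mem_union_right _ (h ▸ hxω)
    · exact Finset.mem_union_left _ (hAB h)
end
end
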